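/- Let C be a hereditary class of graphs with bounded maximum degree d. Then for every positive integer p, C has a bounded-size decomposition with parameter p over the property 'bounded connected components': there is N = d^p + 1 such that every G ∈ C admits a vertex partition into at most N parts with every union of p parts inducing a graph whose components have at most p vertices. -/

import Mathlib

/-- A class of (finite) graphs: a predicate on graphs over arbitrary vertex types. -/
def GraphClass : Type 1 :=
  ∀ (V : Type), SimpleGraph V → Prop

/-- `D'` is a subclass of `D`. -/
def Subclass (D' D : GraphClass) : Prop :=
  ∀ (V : Type) (G : SimpleGraph V), D' V G → D V G

/-- A class is hereditary if it is closed under induced subgraphs. -/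
def Hereditary (D : GraphClass) : Prop :=
  ∀ (V : Type) (G : SimpleGraph V) (s : Set V), D V G → D ↥s (G.induce s)

/-- A hereditary class property: a downset of hereditary graph classes. -/
def IsHereditaryProperty (P : Set GraphClass) : Prop :=
  (∀ D ∈ P, Hereditary D) ∧
  ∀ D ∈ P, ∀ D' : GraphClass, Hereditary D' → Subclass D' D → D' ∈ P

/-- `C` has an `f`-bounded `P`-decomposition with parameter `p`: there is `D ∈ P` such
that every finite graph `G ∈ C` admits a partition of its vertex set into at most
`f (|G|)` parts (given by a coloring), the union of any `p` parts inducing a subgraph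
in `D`. -/
def HasDecomp (C : GraphClass) (P : Set GraphClass) (f : ℕ → ℕ) (p : ℕ) : Prop :=
  ∃ D ∈ P, ∀ (V : Type), Finite V → ∀ G : SimpleGraph V, C V G →
    ∃ N : ℕ, N ≤ f (Nat.card V) ∧ ∃ c : V → Fin N,
      ∀ I : Finset (Fin N), I.card ≤ p →
        D ↥{v | c v ∈ I} (G.induce {v | c v ∈ I})

/-!
Colour the `p`-th power of `G` greedily. A vertex has at most `d ^ p` vertices within distance `p`
(each of them is a neighbour `w` of `v` or lies in the ball of radius `p - 1` around such a `w`,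
a ball which already contains `v`), so `d ^ p + 1` colours suffice. Now take `p` colour classes and
two vertices of one component of the subgraph they induce. If they had the same colour, a path
joining them would have length more than `p`, and its first `p + 1` vertices are pairwise at
distance at most `p` in `G`, so they would need `p + 1` distinct colours. Hence the colouring is
injective on every component, which therefore has at most `p` vertices.
-/

namespace SimpleGraph

variable {V : Type*} (G : SimpleGraph V)

def power (p : ℕ) : SimpleGraph V where
  Adj u w := u ≠ w ∧ ∃ W : G.Walk u w, W.length ≤ p
  symm := ⟨fun _ _ ⟨h, W, hW⟩ => ⟨h.symm, W.reverse, by simpa using hW⟩⟩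
  loopless := ⟨fun _ h => h.1 rfl⟩

variable {G}

def Embedding.powerHom {W : Type*} {G' : SimpleGraph W} (f : G ↪g G') (p : ℕ) :
    G.power p →g G'.power p where
  toFun := f
  map_rel' := fun ⟨hne, P, hP⟩ => ⟨f.injective.ne hne, P.map f.toHom, by simpa using hP⟩

theorem power_zero_neighborSet (v : V) : (G.power 0).neighborSet v = ∅ :=
  Set.eq_empty_of_forall_notMem fun _ ⟨hne, P, hP⟩ =>
    hne (P.eq_of_length_eq_zero (Nat.le_zero.mp hP))

theorem power_succ_neighborSet_subset (k : ℕ) (v : V) :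
    (G.power (k + 1)).neighborSet v ⊆
      ⋃ w ∈ G.neighborSet v, insert w ((G.power k).neighborSet w \ {v}) := by
  rintro u ⟨hvu, P, hP⟩
  cases P with
  | nil => exact absurd rfl hvu
  | @cons _ w _ hvw P =>
    refine Set.mem_biUnion hvw ?_
    by_cases hwu : w = u
    · exact Or.inl hwu.symm
    · exact Or.inr ⟨⟨hwu, P, by simpa using hP⟩, Ne.symm hvu⟩

theorem ncard_power_neighborSet_le [Finite V] {d : ℕ}
    (hd : ∀ v, (G.neighborSet v).ncard ≤ d) (k : ℕ) (v : V) :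
    ((G.power k).neighborSet v).ncard ≤ d ^ k := by
  induction k generalizing v with
  | zero => simp [power_zero_neighborSet]
  | succ k ih =>
    -- for `k ≥ 1` the `k`-ball around a neighbour `w` already contains `v`
    have hbranch : ∀ w ∈ G.neighborSet v,
        (insert w ((G.power k).neighborSet w \ {v})).ncard ≤ d ^ k := by
      intro w hvw
      rcases Nat.eq_zero_or_pos k with rfl | hk
      · simp [power_zero_neighborSet]
      · have hv : v ∈ (G.power k).neighborSet w :=
          ⟨G.ne_of_adj hvw.symm, hvw.symm.toWalk, by simp; omega⟩
        calc _ ≤ ((G.power k).neighborSet w \ {v}).ncard + 1 := Set.ncard_insert_le _ _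
          _ = ((G.power k).neighborSet w).ncard := Set.ncard_sdiff_singleton_add_one hv
          _ ≤ d ^ k := ih w
    set N := (G.neighborSet v).toFinite.toFinset
    calc ((G.power (k + 1)).neighborSet v).ncard
        ≤ (⋃ w ∈ N, insert w ((G.power k).neighborSet w \ {v})).ncard :=
          Set.ncard_le_ncard (by simpa [N] using power_succ_neighborSet_subset k v)
      _ ≤ ∑ w ∈ N, (insert w ((G.power k).neighborSet w \ {v})).ncard :=
          Finset.set_ncard_biUnion_le _ _
      _ ≤ N.card * d ^ k := Finset.sum_le_card_nsmul _ _ _ (by simpa [N] using hbranch)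
      _ ≤ d ^ (k + 1) := by
          rw [pow_succ', ← Set.ncard_eq_toFinset_card]
          exact Nat.mul_le_mul_right _ (hd v)


theorem exists_color_notMem_image_neighborSet [Finite V] {m : ℕ}
    (h : ∀ v, (G.neighborSet v).ncard ≤ m) (c : V → Fin (m + 1)) (v : V) :
    ∃ x, x ∉ c '' G.neighborSet v := by
  by_contra! hall
  have := Set.ncard_le_ncard (Set.univ_subset_iff.mpr (Set.eq_univ_of_forall hall))
    ((G.neighborSet v).toFinite.image c)
  rw [Set.ncard_univ, Nat.card_eq_fintype_card, Fintype.card_fin] at this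
  linarith [Set.ncard_image_le (f := c) (G.neighborSet v).toFinite, h v]

theorem colorable_of_forall_ncard_neighborSet_le [Finite V] {m : ℕ}
    (h : ∀ v, (G.neighborSet v).ncard ≤ m) : G.Colorable (m + 1) := by
  classical
  suffices hall : ∀ s : Finset V, ∃ c : V → Fin (m + 1),
      ∀ u ∈ s, ∀ w ∈ s, G.Adj u w → c u ≠ c w by
    have := Fintype.ofFinite V
    obtain ⟨c, hc⟩ := hall Finset.univ
    exact ⟨Coloring.mk c fun huw => hc _ (Finset.mem_univ _) _ (Finset.mem_univ _) huw⟩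
  intro s
  induction s using Finset.induction_on with
  | empty => exact ⟨fun _ => 0, by simp⟩
  | insert a s _ ih =>
    obtain ⟨c, hc⟩ := ih
    obtain ⟨x, hx⟩ := exists_color_notMem_image_neighborSet h c a
    refine ⟨Function.update c a x, ?_⟩
    have hnew : ∀ w, G.Adj a w → x ≠ c w := fun w haw hxw => hx ⟨w, haw, hxw.symm⟩
    intro u hu w hw huw
    simp only [Finset.mem_insert] at hu hw
    by_cases hua : u = a
    · subst hua
      simpa [Function.update_of_ne (G.ne_of_adj huw).symm] using hnew w huw
    by_cases hwa : w = a
    · subst hwa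
      simpa [Function.update_of_ne hua] using (hnew u huw.symm).symm
    simpa [Function.update_of_ne hua, Function.update_of_ne hwa] using
      hc u (hu.resolve_left hua) w (hw.resolve_left hwa) huw


theorem Walk.IsPath.power_adj_getVert {u v : V} {P : G.Walk u v} (hP : P.IsPath) {p j k : ℕ}
    (hjk : j < k) (hk : k ≤ P.length) (hkp : k ≤ j + p) :
    (G.power p).Adj (P.getVert j) (P.getVert k) := by
  refine ⟨fun h => hjk.ne (hP.getVert_injOn (by simp; omega) (by simp; omega) h), ?_⟩
  refine ⟨((P.drop j).take (k - j)).copy rfl (by simp; congr 1; omega), ?_⟩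
  simp only [Walk.length_copy, Walk.take_length]
  omega

theorem Coloring.injOn_supp_of_power {α : Type*} {p : ℕ} (c : (G.power p).Coloring α)
    {I : Finset α} (hI : I.card ≤ p) (hcI : ∀ v, c v ∈ I) (K : G.ConnectedComponent) :
    Set.InjOn c K.supp := by
  intro u hu w hw hcuw
  by_contra huw
  obtain ⟨P, hP⟩ := (K.reachable_of_mem_supp hu hw).exists_isPath
  have hlen : 0 < P.length := Nat.pos_of_ne_zero fun h => huw (P.eq_of_length_eq_zero h)
  by_cases hshort : P.length ≤ p
  · exact c.valid (by simpa using hP.power_adj_getVert hlen le_rfl (by omega)) hcuw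
  · obtain ⟨j, hj, k, hk, hjk, hcjk⟩ := Finset.exists_ne_map_eq_of_card_lt_of_maps_to
      (s := Finset.range (p + 1)) (t := I) (f := fun i => c (P.getVert i))
      (by simpa using Nat.lt_succ_of_le hI) (fun _ _ => hcI _)
    simp only [Finset.mem_range] at hj hk
    rcases hjk.lt_or_gt with hlt | hlt
    · exact c.valid (hP.power_adj_getVert hlt (by omega) (by omega)) hcjk
    · exact c.valid (hP.power_adj_getVert hlt (by omega) (by omega)) hcjk.symm

end SimpleGraph

/-- Finiteness is recorded explicitly since `Set.ncard` is `0` on infinite sets. -/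
def ComponentsAtMost (p : ℕ) : GraphClass :=
  fun _ G => ∀ K : G.ConnectedComponent, K.supp.Finite ∧ K.supp.ncard ≤ p

open SimpleGraph in
theorem hereditary_componentsAtMost (p : ℕ) : Hereditary (ComponentsAtMost p) := by
  intro V G s hG K
  let φ : G.induce s →g G := (Embedding.induce s).toHom
  have himage : Subtype.val '' K.supp ⊆ (K.map φ).supp := by
    rintro _ ⟨u, hu, rfl⟩
    rw [ConnectedComponent.mem_supp_iff] at hu ⊢
    rw [← hu, ConnectedComponent.map_mk]
    rfl
  obtain ⟨hfin, hcard⟩ := hG (K.map φ)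
  refine ⟨(hfin.subset himage).of_finite_image Subtype.val_injective.injOn, ?_⟩
  calc K.supp.ncard = (Subtype.val '' K.supp).ncard :=
        (Set.ncard_image_of_injective _ Subtype.val_injective).symm
    _ ≤ p := (Set.ncard_le_ncard himage hfin).trans hcard

theorem statement6_general (C : GraphClass) (d : ℕ)
    (hd : ∀ (V : Type), Finite V → ∀ G : SimpleGraph V, C V G →
      ∀ v : V, (G.neighborSet v).ncard ≤ d)
    (p : ℕ) :
    HasDecomp C
      {D | Hereditary D ∧ ∀ (V : Type) (G : SimpleGraph V), D V G →
        ∀ K : G.ConnectedComponent, K.supp.ncard ≤ p}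
      (fun _ => d ^ p + 1) p := by
  refine ⟨ComponentsAtMost p, ⟨hereditary_componentsAtMost p, fun V G h K => (h K).2⟩, ?_⟩
  intro V hV G hG
  obtain ⟨c⟩ := SimpleGraph.colorable_of_forall_ncard_neighborSet_le
    (SimpleGraph.ncard_power_neighborSet_le (hd V hV G hG) p)
  refine ⟨d ^ p + 1, le_rfl, c, fun I hI K => ⟨Set.toFinite _, ?_⟩⟩
  let S := {v | c v ∈ I}
  let cS : ((G.induce S).power p).Coloring (Fin (d ^ p + 1)) :=
    c.comp ((SimpleGraph.Embedding.induce S).powerHom p)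
  calc K.supp.ncard ≤ (I : Set (Fin (d ^ p + 1))).ncard :=
        Set.ncard_le_ncard_of_injOn cS (fun u _ => u.2)
          (cS.injOn_supp_of_power hI (fun u => u.2) K) (Set.toFinite _)
    _ ≤ p := by rwa [Set.ncard_coe_finset]

theorem statement6 (C : GraphClass) (hC : Hereditary C) (d : ℕ)
    (hd : ∀ (V : Type), Finite V → ∀ G : SimpleGraph V, C V G →
      ∀ v : V, (G.neighborSet v).ncard ≤ d)
    (p : ℕ) (hp : 0 < p) :
    HasDecomp C
      {D | Hereditary D ∧ ∀ (V : Type) (G : SimpleGraph V), D V G →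
        ∀ K : G.ConnectedComponent, K.supp.ncard ≤ p}
      (fun _ => d ^ p + 1) p :=
  statement6_general C d hd p
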